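/- Let k be a field and let S = k[[x, y, z, w]] be the power series ring. Then the k-algebra map S → k[[t]] sending x ↦ t⁵, y ↦ t⁶, z ↦ t¹³, w ↦ t¹⁴ induces an isomorphism S/(y³ − xz, yz − xw, x⁴ − yw, z² − y²w, x³y² − zw, x³z − w²) ≅ k[[t⁵, t⁶, t¹³, t¹⁴]], the complete numerical semigroup ring generated by t⁵, t⁶, t¹³, t¹⁴ inside k[[t]]. -/

import Mathlib

/-!
Substituting `x, y, z, w ↦ t⁵, t⁶, t¹³, t¹⁴` is the weighted substitution with weights
`5, 6, 13, 14`: the `n`-th coefficient of the image of `f` is the sum of the coefficients of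
`f` at the monomials of weight `n`. Hence the image consists of the series supported on the
semigroup, and `f` is in the kernel iff every weighted homogeneous component of `f` has
coefficient sum zero, i.e. is a combination of differences of monomials of equal weight.

Such a difference lies in the ideal: oriented so that the potential `12b + 27c + 29d` of
`xᵃyᵇzᶜwᵈ` decreases, the binomial relations rewrite every monomial to one of `xᵃ`, `xᵃy`,
`xᵃy²`, `xᵃz`, `xᵃw`, and two of these with equal weight coincide because `0, 6, 12, 13, 14`
are distinct modulo `5`. As the relations are weighted homogeneous, the memberships of the
infinitely many components assemble into one membership of `f`.
-/

universe u

open MvPowerSeries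

/-- The defining relations `(y³−xz, yz−xw, x⁴−yw, z²−y²w, x³y²−zw, x³z−w²)` inside the power
series ring `k[[x,y,z,w]]`, where `x, y, z, w` are the four variables. -/
noncomputable def theRelations (k : Type u) [Field k] : Ideal (MvPowerSeries (Fin 4) k) :=
  Ideal.span
    ({(X 1) ^ 3 - (X 0) * (X 2),
      (X 1) * (X 2) - (X 0) * (X 3),
      (X 0) ^ 4 - (X 1) * (X 3),
      (X 2) ^ 2 - (X 1) ^ 2 * (X 3),
      (X 0) ^ 3 * (X 1) ^ 2 - (X 2) * (X 3),
      (X 0) ^ 3 * (X 2) - (X 3) ^ 2} : Set (MvPowerSeries (Fin 4) k))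

open Finsupp

namespace Finsupp

theorem range_weight_eq_closure {σ M : Type*} [AddCommMonoid M] (w : σ → M) :
    Set.range (weight w : (σ →₀ ℕ) →+ M) = AddSubmonoid.closure (Set.range w) := by
  ext x
  simp [AddSubmonoid.mem_closure_range_iff, weight_apply, eq_comm]

theorem weight_tsub_add {σ : Type*} (v : σ → ℕ) {b s d : σ →₀ ℕ} (hbd : b ≤ d) :
    weight v (d - b + s) + weight v b = weight v d + weight v s := by
  conv_rhs => rw [← tsub_add_cancel_of_le hbd]
  simp only [map_add]
  ring

end Finsupp

namespace MvPowerSeries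

variable {σ R : Type*} [CommRing R]

theorem isWeightedHomogeneous_monomial_sub_monomial (w : σ → ℕ) {a b : σ →₀ ℕ}
    (hab : weight w a = weight w b) (r : R) :
    IsWeightedHomogeneous w (monomial a r - monomial b r) (weight w a) := fun {d} hd => by
  classical
  contrapose! hd
  rw [map_sub, coeff_monomial, coeff_monomial, if_neg (by rintro rfl; exact hd rfl),
    if_neg (by rintro rfl; exact hd hab.symm), sub_zero]

theorem monomial_sub_monomial_mem_of_le {I : Ideal (MvPowerSeries σ R)} {b s d : σ →₀ ℕ}
    (hbs : monomial b (1 : R) - monomial s 1 ∈ I) (hbd : b ≤ d) :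
    monomial d (1 : R) - monomial (d - b + s) 1 ∈ I := by
  have h : monomial d (1 : R) - monomial (d - b + s) 1 =
      monomial (d - b) 1 * (monomial b 1 - monomial s 1) := by
    rw [mul_sub, monomial_mul_monomial, monomial_mul_monomial, tsub_add_cancel_of_le hbd, mul_one]
  rw [h]
  exact I.mul_mem_left _ hbs

variable {w : σ → ℕ}

theorem IsWeightedHomogeneous.exists_coeff_mul_eq {r : MvPowerSeries σ R} {ρ : ℕ}
    (hr : IsWeightedHomogeneous w r ρ) (g : ℕ → MvPowerSeries σ R) :
    ∃ s : MvPowerSeries σ R, ∀ e, coeff e (s * r) = coeff e (g (weight w e) * r) := by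
  classical
  -- `s` gathers, for every `n`, the part of `g n` of weight `n - ρ`: by homogeneity of `r`, only
  -- that part contributes to `g n * r` in weight `n`.
  refine ⟨show MvPowerSeries σ R from fun p => coeff p (g (weight w p + ρ)), fun e => ?_⟩
  rw [coeff_mul, coeff_mul]
  refine Finset.sum_congr rfl fun pq hpq => ?_
  by_cases hq : coeff pq.2 r = 0
  · simp [hq]
  · have hwt : weight w pq.1 + ρ = weight w e := by
      rw [← hr hq, ← map_add, Finset.HasAntidiagonal.mem_antidiagonal.mp hpq]
    change coeff pq.1 (g (weight w pq.1 + ρ)) * _ = _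
    rw [hwt]

theorem mem_span_of_forall_weightedHomogeneousComponent_mem {ι : Type*} [Fintype ι]
    {r : ι → MvPowerSeries σ R} (hr : ∀ i, ∃ ρ, IsWeightedHomogeneous w (r i) ρ)
    {f : MvPowerSeries σ R}
    (hf : ∀ n, weightedHomogeneousComponent w n f ∈ Ideal.span (Set.range r)) :
    f ∈ Ideal.span (Set.range r) := by
  choose ρ hρ using hr
  choose g hg using fun n => Ideal.mem_span_range_iff_exists_fun.mp (hf n)
  choose s hs using fun i => IsWeightedHomogeneous.exists_coeff_mul_eq (hρ i) (fun n => g n i)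
  refine Ideal.mem_span_range_iff_exists_fun.mpr ⟨s, ?_⟩
  ext e
  calc coeff e (∑ i, s i * r i) = coeff e (∑ i, g (weight w e) i * r i) := by
        simp only [map_sum, hs]
    _ = coeff e f := by
        rw [hg, coeff_weightedHomogeneousComponent, if_pos rfl]

theorem prod_X_pow_weight (d : σ →₀ ℕ) :
    (d.prod fun i e => ((PowerSeries.X : PowerSeries R) ^ w i) ^ e) =
      PowerSeries.X ^ weight w d := by
  simp only [weight_apply, Finsupp.sum, Finsupp.prod, ← pow_mul, Finset.prod_pow_eq_pow_sum,
    smul_eq_mul, mul_comm]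

variable [Finite σ]

theorem hasSubst_X_pow_weight (hw : ∀ i, w i ≠ 0) :
    HasSubst (fun i => (PowerSeries.X : PowerSeries R) ^ w i) :=
  hasSubst_of_constantCoeff_zero fun i => by
    rw [map_pow, show constantCoeff PowerSeries.X = (0 : R) from constantCoeff_X (),
      zero_pow (hw i)]

variable (w) in
noncomputable def weightedSubst (hw : ∀ i, w i ≠ 0) :
    MvPowerSeries σ R →ₐ[R] PowerSeries R :=
  substAlgHom (hasSubst_X_pow_weight hw)

variable (hw : ∀ i, w i ≠ 0)

theorem weightedSubst_X (i : σ) :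
    weightedSubst w hw (X i : MvPowerSeries σ R) = PowerSeries.X ^ w i :=
  substAlgHom_X _ i

theorem coeff_weightedSubst (f : MvPowerSeries σ R) (n : ℕ) :
    PowerSeries.coeff n (weightedSubst w hw f) =
      ∑ d ∈ (finite_of_nat_weight_eq w hw n).toFinset, coeff d f := by
  rw [weightedSubst, coe_substAlgHom, PowerSeries.coeff, coeff_subst (hasSubst_X_pow_weight hw)]
  simp only [prod_X_pow_weight, ← PowerSeries.coeff_def, PowerSeries.coeff_X_pow, smul_eq_mul,
    mul_ite, mul_one, mul_zero]
  rw [finsum_eq_sum_of_support_subset _ (s := (finite_of_nat_weight_eq w hw n).toFinset)]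
  · exact Finset.sum_congr rfl fun d hd => if_pos (by simpa [eq_comm] using hd)
  · intro d hd
    simp only [Function.mem_support, ne_eq, ite_eq_right_iff, Classical.not_imp] at hd
    simpa [eq_comm] using hd.1

theorem weightedHomogeneousComponent_eq_sum (f : MvPowerSeries σ R) (n : ℕ) :
    weightedHomogeneousComponent w n f =
      ∑ d ∈ (finite_of_nat_weight_eq w hw n).toFinset, monomial d (coeff d f) := by
  classical
  ext e
  simp [coeff_weightedHomogeneousComponent, coeff_monomial]

theorem mem_span_of_weightedSubst_eq_zero {ι : Type*} [Fintype ι] {r : ι → MvPowerSeries σ R}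
    (hr : ∀ i, ∃ ρ, IsWeightedHomogeneous w (r i) ρ)
    (hmono : ∀ a b : σ →₀ ℕ, weight w a = weight w b →
      monomial a (1 : R) - monomial b 1 ∈ Ideal.span (Set.range r))
    {f : MvPowerSeries σ R} (hf : weightedSubst w hw f = 0) : f ∈ Ideal.span (Set.range r) := by
  refine mem_span_of_forall_weightedHomogeneousComponent_mem hr fun n => ?_
  rw [weightedHomogeneousComponent_eq_sum hw]
  set F := (finite_of_nat_weight_eq w hw n).toFinset
  obtain hF | ⟨b, hb⟩ := F.eq_empty_or_nonempty
  · rw [hF, Finset.sum_empty]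
    exact zero_mem _
  have hbF : ∀ d ∈ F, weight w d = weight w b := fun d hd => by
    simp only [F, Set.Finite.mem_toFinset, Set.mem_ofPred_eq] at hd hb
    rw [hd, hb]
  have hsum : ∑ d ∈ F, coeff d f = 0 := by
    rw [← coeff_weightedSubst hw, hf, map_zero]
  have hsplit : ∑ d ∈ F, monomial d (coeff d f) =
      ∑ d ∈ F, C (coeff d f) * (monomial d 1 - monomial b 1) +
        monomial b (∑ d ∈ F, coeff d f) := by
    simp only [mul_sub, Finset.sum_sub_distrib, map_sum, ← monomial_zero_eq_C_apply,
      monomial_mul_monomial, zero_add, mul_one]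
    abel
  rw [hsplit, hsum, map_zero, add_zero]
  exact Ideal.sum_mem _ fun d hd => Ideal.mul_mem_left _ _ (hmono d b (hbF d hd))

theorem range_weightedSubst :
    Set.range (weightedSubst w hw : MvPowerSeries σ R → PowerSeries R) =
      {g | ∀ n, PowerSeries.coeff n g ≠ 0 →
        n ∈ Set.range (weight w : (σ →₀ ℕ) →+ ℕ)} := by
  classical
  ext g
  constructor
  · rintro ⟨f, rfl⟩ n hn
    rw [coeff_weightedSubst hw] at hn
    obtain ⟨d, hd, -⟩ := Finset.exists_ne_zero_of_sum_ne_zero hn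
    exact ⟨d, by simpa using hd⟩
  · intro hg
    -- a preimage: `g_n` placed on one chosen monomial of weight `n`
    let F : MvPowerSeries σ R := fun d =>
      if d = Function.invFun (weight w) (weight w d) then PowerSeries.coeff (weight w d) g else 0
    have hF : ∀ n, ∀ d ∈ (finite_of_nat_weight_eq w hw n).toFinset,
        coeff d F = if d = Function.invFun (weight w) n then PowerSeries.coeff n g else 0 := by
      intro n d hd
      rw [← (Set.Finite.mem_toFinset _).mp hd]
      rfl
    refine ⟨F, PowerSeries.ext fun n => ?_⟩
    rw [coeff_weightedSubst hw, Finset.sum_congr rfl (hF n), Finset.sum_ite_eq']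
    split_ifs with h
    · rfl
    · by_contra hne
      exact h ((Set.Finite.mem_toFinset _).mpr (Function.invFun_eq (hg n (Ne.symm hne))))

end MvPowerSeries

namespace NumericalSemigroup5_6_13_14

def degrees : Fin 4 → ℕ := ![5, 6, 13, 14]

/- Row `i` of `leadExponent` and `tailExponent` is the `i`-th relation of `theRelations` as
`X ^ lead - X ^ tail`, up to sign, oriented so that `potential` decreases from lead to tail:
`y³ → xz`, `yz → xw`, `yw → x⁴`, `z² → y²w`, `zw → x³y²`, `w² → x³z`. -/
noncomputable def leadExponent (i : Fin 6) : Fin 4 →₀ ℕ :=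
  equivFunOnFinite.symm
    (!![0, 3, 0, 0; 0, 1, 1, 0; 0, 1, 0, 1; 0, 0, 2, 0; 0, 0, 1, 1; 0, 0, 0, 2] i)

noncomputable def tailExponent (i : Fin 6) : Fin 4 →₀ ℕ :=
  equivFunOnFinite.symm
    (!![1, 0, 1, 0; 1, 0, 0, 1; 4, 0, 0, 0; 0, 2, 0, 1; 3, 2, 0, 0; 3, 0, 1, 0] i)

def potential : Fin 4 → ℕ := ![0, 12, 27, 29]

theorem weight_degrees_lead_eq_tail (i : Fin 6) :
    weight degrees (leadExponent i) = weight degrees (tailExponent i) := by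
  fin_cases i <;> simp [weight_eq_sum, Fin.sum_univ_four, leadExponent, tailExponent, degrees]

theorem weight_potential_tail_lt_lead (i : Fin 6) :
    weight potential (tailExponent i) < weight potential (leadExponent i) := by
  fin_cases i <;> simp [weight_eq_sum, Fin.sum_univ_four, leadExponent, tailExponent, potential]

def IsReduced (d : Fin 4 →₀ ℕ) : Prop := ∀ i, ¬ leadExponent i ≤ d

theorem IsReduced.cases {d : Fin 4 →₀ ℕ} (hd : IsReduced d) :
    d 1 = 0 ∧ d 2 = 0 ∧ d 3 = 0 ∨ d 1 = 1 ∧ d 2 = 0 ∧ d 3 = 0 ∨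
      d 1 = 2 ∧ d 2 = 0 ∧ d 3 = 0 ∨ d 1 = 0 ∧ d 2 = 1 ∧ d 3 = 0 ∨
      d 1 = 0 ∧ d 2 = 0 ∧ d 3 = 1 := by
  simp [IsReduced, Fin.forall_fin_succ, Finsupp.le_def, leadExponent] at hd
  omega

theorem eq_of_isReduced {d d' : Fin 4 →₀ ℕ} (hd : IsReduced d) (hd' : IsReduced d')
    (h : weight degrees d = weight degrees d') : d = d' := by
  simp only [weight_eq_sum, Fin.sum_univ_four, degrees, smul_eq_mul, Matrix.cons_val_zero,
    Matrix.cons_val_one, Matrix.cons_val] at h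
  ext i
  fin_cases i <;> simp only [Fin.zero_eta, Fin.mk_one, Fin.reduceFinMk] <;>
    rcases hd.cases with hd | hd | hd | hd | hd <;>
    rcases hd'.cases with hd' | hd' | hd' | hd' | hd' <;> omega

section Binomials

variable (R : Type*) [CommRing R]

noncomputable def binomial (i : Fin 6) : MvPowerSeries (Fin 4) R :=
  monomial (leadExponent i) 1 - monomial (tailExponent i) 1

theorem isWeightedHomogeneous_binomial (i : Fin 6) :
    IsWeightedHomogeneous degrees (binomial R i) (weight degrees (leadExponent i)) :=
  isWeightedHomogeneous_monomial_sub_monomial degrees (weight_degrees_lead_eq_tail i) 1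

variable {R}

theorem exists_isReduced_monomial_sub_mem (d : Fin 4 →₀ ℕ) :
    ∃ d', IsReduced d' ∧ weight degrees d' = weight degrees d ∧
      monomial d (1 : R) - monomial d' 1 ∈ Ideal.span (Set.range (binomial R)) := by
  induction hV : weight potential d using Nat.strong_induction_on generalizing d with
  | _ n ih =>
  by_cases hd : IsReduced d
  · exact ⟨d, hd, rfl, by simp⟩
  obtain ⟨i, hi⟩ := not_forall_not.mp hd
  have hstep : monomial d (1 : R) - monomial (d - leadExponent i + tailExponent i) 1 ∈
      Ideal.span (Set.range (binomial R)) :=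
    monomial_sub_monomial_mem_of_le (Ideal.subset_span ⟨i, rfl⟩) hi
  have hweight : weight degrees (d - leadExponent i + tailExponent i) = weight degrees d := by
    have := weight_tsub_add degrees hi (s := tailExponent i)
    rw [weight_degrees_lead_eq_tail] at this
    omega
  have hpotential : weight potential (d - leadExponent i + tailExponent i) < n := by
    have := weight_tsub_add potential hi (s := tailExponent i)
    have := weight_potential_tail_lt_lead i
    omega
  obtain ⟨d', hd', hwd', hmem⟩ := ih _ hpotential _ rfl
  refine ⟨d', hd', hwd'.trans hweight, ?_⟩
  simpa using add_mem hstep hmem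

theorem monomial_sub_monomial_mem_of_weight_eq {a b : Fin 4 →₀ ℕ}
    (h : weight degrees a = weight degrees b) :
    monomial a (1 : R) - monomial b 1 ∈ Ideal.span (Set.range (binomial R)) := by
  obtain ⟨a', ha', hwa, hma⟩ := exists_isReduced_monomial_sub_mem (R := R) a
  obtain ⟨b', hb', hwb, hmb⟩ := exists_isReduced_monomial_sub_mem (R := R) b
  obtain rfl : a' = b' := eq_of_isReduced ha' hb' (by rw [hwa, hwb, h])
  simpa using sub_mem hma hmb

end Binomials

theorem binomial_mem_theRelations (k : Type u) [Field k] (i : Fin 6) :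
    binomial k i ∈ theRelations k := by
  fin_cases i <;>
    simp only [binomial, leadExponent, tailExponent, monomial_one_eq, prod_fintype, implies_true,
      pow_zero, pow_one, one_mul, mul_one, equivFunOnFinite_symm_apply_apply, Matrix.of_apply,
      Matrix.cons_val', Matrix.cons_val_fin_one, Matrix.cons_val_zero, Matrix.cons_val_one,
      Matrix.cons_val, Fin.prod_univ_four, Fin.zero_eta, Fin.mk_one, Fin.reduceFinMk, Fin.isValue]
  all_goals first
    | (apply Ideal.subset_span; simp; done)
    | (rw [← neg_sub]; apply neg_mem; apply Ideal.subset_span; simp)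

theorem range_degrees : Set.range degrees = {5, 6, 13, 14} := by
  simp only [degrees, Matrix.range_cons, Matrix.range_empty, Set.union_empty, Set.singleton_union]

theorem degrees_ne_zero (i : Fin 4) : degrees i ≠ 0 := by
  fin_cases i <;> simp [degrees]

theorem theRelations_le_ker (k : Type u) [Field k] :
    theRelations k ≤ RingHom.ker (weightedSubst (R := k) degrees degrees_ne_zero) := by
  rw [theRelations, Ideal.span_le]
  rintro _ (rfl | rfl | rfl | rfl | rfl | rfl) <;>
    simp only [SetLike.mem_coe, RingHom.mem_ker, map_sub, map_mul, map_pow, weightedSubst_X,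
      degrees, Matrix.cons_val_zero, Matrix.cons_val_one, Matrix.cons_val] <;>
    ring

theorem ker_le_theRelations (k : Type u) [Field k] :
    RingHom.ker (weightedSubst (R := k) degrees degrees_ne_zero) ≤ theRelations k := fun _ hf =>
  Ideal.span_le.mpr (Set.range_subset_iff.mpr (binomial_mem_theRelations k))
    (mem_span_of_weightedSubst_eq_zero degrees_ne_zero
      (fun i => ⟨_, isWeightedHomogeneous_binomial k i⟩)
      (fun _ _ h => monomial_sub_monomial_mem_of_weight_eq h) hf)

end NumericalSemigroup5_6_13_14

theorem powerSeries_quotient_iso_semigroupRing (k : Type u) [Field k] :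
    ∃ f : (MvPowerSeries (Fin 4) k ⧸ theRelations k) →ₐ[k] PowerSeries k,
      Function.Injective f ∧
      Set.range f = {g : PowerSeries k | ∀ d : ℕ, PowerSeries.coeff d g ≠ 0 →
        d ∈ AddSubmonoid.closure ({5, 6, 13, 14} : Set ℕ)} ∧
      f (Ideal.Quotient.mk (theRelations k) (X 0)) = PowerSeries.X ^ 5 ∧
      f (Ideal.Quotient.mk (theRelations k) (X 1)) = PowerSeries.X ^ 6 ∧
      f (Ideal.Quotient.mk (theRelations k) (X 2)) = PowerSeries.X ^ 13 ∧
      f (Ideal.Quotient.mk (theRelations k) (X 3)) = PowerSeries.X ^ 14 := by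
  open NumericalSemigroup5_6_13_14 in
  let φ := weightedSubst (R := k) degrees degrees_ne_zero
  have hφ : ∀ a ∈ theRelations k, φ a = 0 := fun _ ha => theRelations_le_ker k ha
  refine ⟨Ideal.Quotient.liftₐ _ φ hφ, ?_, ?_, ?_, ?_, ?_, ?_⟩
  · exact RingHom.lift_injective_of_ker_le_ideal _ hφ (ker_le_theRelations k)
  · have hrange : Set.range (Ideal.Quotient.liftₐ _ φ hφ) = Set.range φ :=
      (Ideal.Quotient.mk_surjective.range_comp _).symm
    rw [hrange, range_weightedSubst, range_weight_eq_closure, range_degrees]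
    rfl
  all_goals exact weightedSubst_X degrees_ne_zero _
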